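/- arXiv:2509.00880 — 2 statements merged into one kernel-verified Lean document; each statement's English description precedes it below -/
import Mathlib

section
/- The 12 triangular lattice points in a closed equiangular hexagon with side lengths alternating 1 and 2 form a 5-distance set: the set of squared pairwise distances between distinct points is exactly {1, 3, 4, 7, 9}. -/
/-! In lattice coordinates the hexagon `hexE 1` is the lattice hexagon with vertices
(1,0), (1,2), (0,3), (-2,3), (-2,2), (0,0), cut out by `-2 ≤ a ≤ 1`, `0 ≤ b ≤ 3`,
`0 ≤ a + b ≤ 3`. Each of the 12 integer points of that region is a vertex or lies on a chord
between two vertices, so these are exactly its lattice points. The squared distance between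
lattice points is the Eisenstein norm `a² + ab + b²` of their difference, which leaves a finite
computation over the 12 points. -/

/-- Triangular lattice point a•(1,0) + b•(1/2, √3/2). -/
noncomputable def tri (a b : ℤ) : ℝ × ℝ :=
  ((a : ℝ) + (b : ℝ) / 2, (b : ℝ) * Real.sqrt 3 / 2)

/-- Squared Euclidean distance in the plane. -/
def sqd (p q : ℝ × ℝ) : ℝ := (p.1 - q.1) ^ 2 + (p.2 - q.2) ^ 2

/-- The triangular lattice. -/
noncomputable def triLattice : Set (ℝ × ℝ) := {p | ∃ a b : ℤ, p = tri a b}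

/-- Closed regular hexagon of side `k` centered at the origin with a vertex at `(k,0)`. -/
noncomputable def hexR (k : ℤ) : Set (ℝ × ℝ) :=
  convexHull ℝ ({tri k 0, tri 0 k, tri (-k) k, tri (-k) 0, tri 0 (-k), tri k (-k)} : Set (ℝ × ℝ))

/-- Closed (k, k+1)-equiangular hexagon with vertices at lattice points. -/
noncomputable def hexE (k : ℤ) : Set (ℝ × ℝ) :=
  convexHull ℝ ({tri k 0, tri k (k+1), tri 0 (2*k+1), tri (-(k+1)) (2*k+1),
    tri (-(k+1)) (k+1), tri 0 0} : Set (ℝ × ℝ))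

/-- Set of squared distances between distinct points of `X`. -/
def sqdSet (X : Set (ℝ × ℝ)) : Set ℝ := {d | ∃ p ∈ X, ∃ q ∈ X, p ≠ q ∧ d = sqd p q}

open Set Function

def triNormSq (q : ℤ × ℤ) : ℤ := q.1 ^ 2 + q.1 * q.2 + q.2 ^ 2

theorem sqd_tri (p q : ℤ × ℤ) : sqd (uncurry tri p) (uncurry tri q) = triNormSq (p - q) := by
  have h3 : √3 ^ 2 = 3 := Real.sq_sqrt (by norm_num)
  simp only [sqd, uncurry, tri, triNormSq, Prod.fst_sub, Prod.snd_sub]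
  push_cast
  linear_combination ((p.2 : ℝ) - q.2) ^ 2 / 4 * h3

noncomputable def triMap : ℝ × ℝ →ₗ[ℝ] ℝ × ℝ where
  toFun q := (q.1 + q.2 / 2, q.2 * √3 / 2)
  map_add' x y := by simp only [Prod.fst_add, Prod.snd_add, Prod.mk_add_mk]; ring_nf
  map_smul' c x := by
    simp only [Prod.smul_fst, Prod.smul_snd, smul_eq_mul, RingHom.id_apply, Prod.smul_mk]; ring_nf

theorem triMap_intCast (a b : ℤ) : triMap (a, b) = tri a b := rfl

theorem triMap_injective : Injective triMap := by
  rintro ⟨x₁, y₁⟩ ⟨x₂, y₂⟩ h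
  obtain ⟨h₁, h₂⟩ := Prod.mk.inj h
  have hy : y₁ = y₂ := by field_simp at h₂; exact h₂
  exact Prod.ext (by linarith) hy

theorem tri_injective : Injective (uncurry tri) := by
  rintro ⟨a, b⟩ ⟨c, d⟩ h
  simp only [uncurry_apply_pair, ← triMap_intCast] at h
  simpa only [Prod.mk.injEq, Int.cast_inj] using triMap_injective h

def hexVertices (k : ℝ) : Set (ℝ × ℝ) :=
  {(k, 0), (k, k + 1), (0, 2 * k + 1), (-(k + 1), 2 * k + 1), (-(k + 1), k + 1), (0, 0)}

theorem hexE_eq_image (k : ℤ) : hexE k = triMap '' convexHull ℝ (hexVertices k) := by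
  simp only [hexE, hexVertices, LinearMap.image_convexHull, image_insert_eq, image_singleton,
    ← triMap_intCast]
  push_cast
  rfl

def hexRegion (k : ℝ) : Set (ℝ × ℝ) :=
  {q | -(k + 1) ≤ q.1 ∧ q.1 ≤ k ∧ 0 ≤ q.2 ∧ q.2 ≤ 2 * k + 1 ∧ 0 ≤ q.1 + q.2 ∧
    q.1 + q.2 ≤ 2 * k + 1}

theorem convex_hexRegion (k : ℝ) : Convex ℝ (hexRegion k) := by
  rintro ⟨x₁, y₁⟩ ⟨h₁, h₂, h₃, h₄, h₅, h₆⟩ ⟨x₂, y₂⟩ ⟨h₁', h₂', h₃', h₄', h₅', h₆'⟩ s t hs ht hst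
  simp only [hexRegion, mem_ofPred_eq, Prod.smul_mk, Prod.mk_add_mk, smul_eq_mul]
  refine ⟨?_, ?_, ?_, ?_, ?_, ?_⟩ <;> nlinarith

theorem convexHull_hexVertices_subset {k : ℝ} (hk : 0 ≤ k) :
    convexHull ℝ (hexVertices k) ⊆ hexRegion k := by
  refine convexHull_min ?_ (convex_hexRegion k)
  simp only [hexVertices, insert_subset_iff, singleton_subset_iff, hexRegion, mem_ofPred_eq]
  refine ⟨?_, ?_, ?_, ?_, ?_, ?_⟩ <;> refine ⟨?_, ?_, ?_, ?_, ?_, ?_⟩ <;> linarith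

noncomputable def hexLatticePoints (k : ℤ) : Finset (ℤ × ℤ) :=
  (Finset.Icc (-(k + 1)) k ×ˢ Finset.Icc 0 (2 * k + 1)).filter
    fun q => 0 ≤ q.1 + q.2 ∧ q.1 + q.2 ≤ 2 * k + 1

theorem mem_hexLatticePoints_iff {k : ℤ} {q : ℤ × ℤ} :
    q ∈ hexLatticePoints k ↔ ((q.1 : ℝ), (q.2 : ℝ)) ∈ hexRegion k := by
  simp only [hexLatticePoints, Finset.mem_filter, Finset.mem_product, Finset.mem_Icc, hexRegion,
    mem_ofPred_eq]
  norm_cast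
  tauto

theorem mem_convexHull_hexVertices_one {q : ℤ × ℤ} (hq : q ∈ hexLatticePoints 1) :
    ((q.1 : ℝ), (q.2 : ℝ)) ∈ convexHull ℝ (hexVertices 1) := by
  have chord (v w : ℝ × ℝ) (t : ℝ) {p : ℝ × ℝ} (hv : v ∈ hexVertices 1) (hw : w ∈ hexVertices 1)
      (ht : t ∈ Icc 0 1) (hp : AffineMap.lineMap v w t = p) : p ∈ convexHull ℝ (hexVertices 1) :=
    hp ▸ (convex_convexHull ℝ _).lineMap_mem (subset_convexHull ℝ _ hv)
      (subset_convexHull ℝ _ hw) ht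
  fin_cases hq
  all_goals try (apply subset_convexHull ℝ; norm_num [hexVertices]; done)
  · refine chord (-2, 2) (0, 0) (1 / 2) ?_ ?_ ?_ ?_ <;>
      norm_num [hexVertices, AffineMap.lineMap_apply]
  · refine chord (1, 2) (-2, 2) (2 / 3) ?_ ?_ ?_ ?_ <;>
      norm_num [hexVertices, AffineMap.lineMap_apply]
  · refine chord (-2, 3) (0, 3) (1 / 2) ?_ ?_ ?_ ?_ <;>
      norm_num [hexVertices, AffineMap.lineMap_apply]
  · refine chord (0, 0) (0, 3) (1 / 3) ?_ ?_ ?_ ?_ <;>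
      norm_num [hexVertices, AffineMap.lineMap_apply]
  · refine chord (0, 0) (0, 3) (2 / 3) ?_ ?_ ?_ ?_ <;>
      norm_num [hexVertices, AffineMap.lineMap_apply]
  · refine chord (1, 0) (1, 2) (1 / 2) ?_ ?_ ?_ ?_ <;>
      norm_num [hexVertices, AffineMap.lineMap_apply]

theorem tri_mem_hexE_one_iff {q : ℤ × ℤ} : uncurry tri q ∈ hexE 1 ↔ q ∈ hexLatticePoints 1 := by
  rw [hexE_eq_image, Int.cast_one, uncurry, ← triMap_intCast, triMap_injective.mem_set_image]
  refine ⟨fun h => mem_hexLatticePoints_iff.2 ?_, mem_convexHull_hexVertices_one⟩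
  exact_mod_cast convexHull_hexVertices_subset zero_le_one h

theorem triLattice_inter_hexE_one : triLattice ∩ hexE 1 = uncurry tri '' hexLatticePoints 1 := by
  ext p
  constructor
  · rintro ⟨⟨a, b, rfl⟩, hp⟩
    exact ⟨(a, b), tri_mem_hexE_one_iff.1 hp, rfl⟩
  · rintro ⟨q, hq, rfl⟩
    exact ⟨⟨q.1, q.2, rfl⟩, tri_mem_hexE_one_iff.2 hq⟩

theorem sqdSet_image_tri (S : Set (ℤ × ℤ)) :
    sqdSet (uncurry tri '' S) =
      Int.cast '' ((fun pq : (ℤ × ℤ) × (ℤ × ℤ) => triNormSq (pq.1 - pq.2)) '' S.offDiag) := by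
  ext d
  constructor
  · rintro ⟨_, ⟨p, hp, rfl⟩, _, ⟨q, hq, rfl⟩, hne, rfl⟩
    exact ⟨_, ⟨(p, q), ⟨hp, hq, fun h => hne (congrArg _ h)⟩, rfl⟩, (sqd_tri p q).symm⟩
  · rintro ⟨_, ⟨⟨p, q⟩, ⟨hp, hq, hne⟩, rfl⟩, rfl⟩
    exact ⟨_, ⟨p, hp, rfl⟩, _, ⟨q, hq, rfl⟩, tri_injective.ne hne, (sqd_tri p q).symm⟩

set_option maxRecDepth 2000 in
theorem image_triNormSq_offDiag_hexLatticePoints_one :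
    (hexLatticePoints 1).offDiag.image (fun pq => triNormSq (pq.1 - pq.2)) = {1, 3, 4, 7, 9} := by
  decide

theorem equiangular_1_2_hexagon_five_distance :
    (triLattice ∩ hexE 1).ncard = 12 ∧
      sqdSet (triLattice ∩ hexE 1) = {1, 3, 4, 7, 9} := by
  rw [triLattice_inter_hexE_one]
  constructor
  · rw [ncard_image_of_injective _ tri_injective, ncard_coe_finset]
    decide
  · rw [sqdSet_image_tri, ← Finset.coe_offDiag, ← Finset.coe_image,
      image_triNormSq_offDiag_hexLatticePoints_one]
    simp only [Finset.coe_insert, Finset.coe_singleton, image_insert_eq, image_singleton]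
    norm_num
end

section
/- Any point added to the 37 triangular lattice points of a regular hexagon of side length 3, if the resulting 38-point set lies in the triangular lattice, creates at least 2 new squared distances beyond {1,3,4,7,9,12,13,16,19,21,25,27,28,31,36}; hence no 38-point triangular-lattice superset of this hexagon is a 16-distance set using the 16 smallest lattice distances. -/
/-! ### Auxiliary integer quadratic form -/

def NN (x y : ℤ) : ℤ := x^2 + x*y + y^2
def Sl : List ℤ := [1,3,4,7,9,12,13,16,19,21,25,27,28,31,36]
def Hl : List (ℤ × ℤ) := [(-3,0), (-3,1), (-3,2), (-3,3), (-2,-1), (-2,0), (-2,1), (-2,2), (-2,3), (-1,-2), (-1,-1), (-1,0), (-1,1), (-1,2), (-1,3), (0,-3), (0,-2), (0,-1), (0,0), (0,1), (0,2), (0,3), (1,-3), (1,-2), (1,-1), (1,0), (1,1), (1,2), (2,-3), (2,-2), (2,-1), (2,0), (2,1), (3,-3), (3,-2), (3,-1), (3,0)]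

lemma sqd_tri_s18 (a b c d : ℤ) : sqd (tri a b) (tri c d) = ((NN (a-c) (b-d) : ℤ) : ℝ) := by
  have h3 : Real.sqrt 3 ^ 2 = 3 := Real.sq_sqrt (by norm_num)
  simp only [sqd, tri, NN]
  push_cast
  linear_combination (((b:ℝ) - (d:ℝ))^2/4) * h3

lemma tri_inj {a b c d : ℤ} (h : tri a b = tri c d) : a = c ∧ b = d := by
  have h3 : (0:ℝ) < Real.sqrt 3 := Real.sqrt_pos.mpr (by norm_num)
  have h1 := congrArg Prod.fst h
  have h2 := congrArg Prod.snd h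
  simp only [tri] at h1 h2
  have hb : (b:ℝ) * Real.sqrt 3 = (d:ℝ) * Real.sqrt 3 := by linarith
  have hb2 : (b:ℝ) = d := mul_right_cancel₀ h3.ne' hb
  have hb' : b = d := by exact_mod_cast hb2
  refine ⟨?_, hb'⟩
  have : (a:ℝ) = c := by rw [hb2] at h1; linarith
  exact_mod_cast this

/-! ### Membership in the hexagon -/

lemma comb_mem (a b : ℤ) (w0 w1 w2 w3 w4 w5 : ℝ)
    (h0 : 0 ≤ w0) (h1 : 0 ≤ w1) (h2 : 0 ≤ w2) (h3 : 0 ≤ w3) (h4 : 0 ≤ w4) (h5 : 0 ≤ w5)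
    (hs : w0 + w1 + w2 + w3 + w4 + w5 = 1)
    (ha : (a:ℝ) = 3*w0 - 3*w2 - 3*w3 + 3*w5)
    (hb : (b:ℝ) = 3*w1 + 3*w2 - 3*w4 - 3*w5) : tri a b ∈ hexR 3 := by
  set V : Set (ℝ × ℝ) := {tri 3 0, tri 0 3, tri (-3) 3, tri (-3) 0, tri 0 (-3), tri 3 (-3)} with hV
  set z : Fin 6 → ℝ × ℝ := ![tri 3 0, tri 0 3, tri (-3) 3, tri (-3) 0, tri 0 (-3), tri 3 (-3)] with hz
  set w : Fin 6 → ℝ := ![w0, w1, w2, w3, w4, w5] with hw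
  have key : tri a b = ∑ i : Fin 6, w i • z i := by
    rw [Fin.sum_univ_six]
    show tri a b = w0 • tri 3 0 + w1 • tri 0 3 + w2 • tri (-3) 3 + w3 • tri (-3) 0
      + w4 • tri 0 (-3) + w5 • tri 3 (-3)
    simp only [tri, Prod.smul_mk, smul_eq_mul, Prod.mk_add_mk, Prod.mk.injEq]
    push_cast
    constructor
    · linear_combination ha + hb/2
    · linear_combination (Real.sqrt 3 / 2) * hb
  have hmem : ∀ i : Fin 6, z i ∈ convexHull ℝ V := by
    intro i
    apply subset_convexHull
    fin_cases i <;> simp [hz, hV]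
  have hrun : ∑ i : Fin 6, w i = 1 := by
    rw [Fin.sum_univ_six]; exact hs
  have hnn : ∀ i : Fin 6, 0 ≤ w i := by
    intro i; fin_cases i <;> assumption
  have := (convex_convexHull ℝ V).sum_mem (t := Finset.univ)
    (fun i _ => hnn i) hrun (fun i _ => hmem i)
  rw [key]; exact this

lemma tri_mem_hexR (a b : ℤ) (ha : |a| ≤ 3) (hb : |b| ≤ 3) (hab : |a+b| ≤ 3) :
    tri a b ∈ hexR 3 := by
  rw [abs_le] at ha hb hab
  have ha1 : (-3:ℝ) ≤ a := by exact_mod_cast ha.1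
  have ha2 : (a:ℝ) ≤ 3 := by exact_mod_cast ha.2
  have hb1 : (-3:ℝ) ≤ b := by exact_mod_cast hb.1
  have hb2 : (b:ℝ) ≤ 3 := by exact_mod_cast hb.2
  have hab1 : (-3:ℝ) ≤ (a:ℝ) + b := by exact_mod_cast hab.1
  have hab2 : ((a:ℝ) + b) ≤ 3 := by exact_mod_cast hab.2
  rcases le_or_gt 0 (a:ℝ) with hpa | hpa <;> rcases le_or_gt 0 (b:ℝ) with hpb | hpb
  · exact comb_mem a b ((a:ℝ)/3 + (1 - a/3 - b/3)/2) ((b:ℝ)/3) 0 ((1 - (a:ℝ)/3 - b/3)/2) 0 0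
      (by linarith) (by linarith) le_rfl (by linarith) le_rfl le_rfl
      (by ring_nf) (by ring) (by ring)
  · rcases le_or_gt 0 ((a:ℝ)+b) with hs | hs
    · exact comb_mem a b (((a:ℝ)+b)/3 + (1 - a/3)/2) 0 0 ((1 - (a:ℝ)/3)/2) 0 (-(b:ℝ)/3)
        (by linarith) le_rfl le_rfl (by linarith) le_rfl (by linarith)
        (by ring_nf) (by ring) (by ring)
    · exact comb_mem a b ((1 + (b:ℝ)/3)/2) 0 0 ((1 + (b:ℝ)/3)/2) (-((a:ℝ)+b)/3) ((a:ℝ)/3)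
        (by linarith) le_rfl le_rfl (by linarith) (by linarith) (by linarith)
        (by ring_nf) (by ring) (by ring)
  · rcases le_or_gt 0 ((a:ℝ)+b) with hs | hs
    · exact comb_mem a b ((1 - (b:ℝ)/3)/2) (((a:ℝ)+b)/3) (-(a:ℝ)/3) ((1 - (b:ℝ)/3)/2) 0 0
        (by linarith) (by linarith) (by linarith) (by linarith) le_rfl le_rfl
        (by ring_nf) (by ring) (by ring)
    · exact comb_mem a b ((1 + (a:ℝ)/3)/2) 0 ((b:ℝ)/3) (-((a:ℝ)+b)/3 + (1 + (a:ℝ)/3)/2) 0 0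
        (by linarith) le_rfl (by linarith) (by linarith) le_rfl le_rfl
        (by ring_nf) (by ring) (by ring)
  · exact comb_mem a b ((1 + (a:ℝ)/3 + b/3)/2) 0 0 (-(a:ℝ)/3 + (1 + (a:ℝ)/3 + b/3)/2) (-(b:ℝ)/3) 0
      (by linarith) le_rfl le_rfl (by linarith) (by linarith) le_rfl
      (by ring_nf) (by ring) (by ring)

lemma Hl_mem (q : ℤ × ℤ) (h : q ∈ Hl) : tri q.1 q.2 ∈ triLattice ∩ hexR 3 := by
  have hb : |q.1| ≤ 3 ∧ |q.2| ≤ 3 ∧ |q.1 + q.2| ≤ 3 := by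
    revert h; revert q; decide
  exact ⟨⟨q.1, q.2, rfl⟩, tri_mem_hexR q.1 q.2 hb.1 hb.2.1 hb.2.2⟩

/-! ### The combinatorial core -/

def GoodPair (a b : ℤ) : Prop :=
  ∃ q ∈ Hl, ∃ r ∈ Hl, NN (a-q.1) (b-q.2) ∉ Sl ∧ NN (a-r.1) (b-r.2) ∉ Sl ∧
    NN (a-q.1) (b-q.2) ≠ NN (a-r.1) (b-r.2)

instance (a b : ℤ) : Decidable (GoodPair a b) := by unfold GoodPair; infer_instance

lemma near (a b : ℤ) (ha : -7 ≤ a ∧ a ≤ 7) (hb : -7 ≤ b ∧ b ≤ 7)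
    (hout : ¬(|a| ≤ 3 ∧ |b| ≤ 3 ∧ |a+b| ≤ 3)) : GoodPair a b := by
  obtain ⟨ha1, ha2⟩ := ha
  obtain ⟨hb1, hb2⟩ := hb
  interval_cases a <;> interval_cases b <;> revert hout <;> decide

lemma notS {n : ℤ} (h : 36 < n) : n ∉ Sl := by simp [Sl]; omega

lemma farb (a b : ℤ) (h : 8 ≤ |b|) : GoodPair a b := by
  have hb2 : 64 ≤ b^2 := by nlinarith [sq_abs b, abs_nonneg b]
  have big : ∀ x : ℤ, 36 < NN x b := by
    intro x
    have h4 : 4 * NN x b = (2*x+b)^2 + 3*b^2 := by unfold NN; ring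
    nlinarith [sq_nonneg (2*x+b)]
  by_cases hc : 2*a + b = 1
  · refine ⟨(0,0), by decide, (-1,0), by decide, ?_, ?_, ?_⟩ <;>
      simp only [sub_zero, sub_neg_eq_add]
    · exact notS (big _)
    · exact notS (big _)
    · intro heq
      have e : NN a b - NN (a+1) b = -(2*a+b) - 1 := by unfold NN; ring
      rw [heq, sub_self] at e
      omega
  · refine ⟨(0,0), by decide, (1,0), by decide, ?_, ?_, ?_⟩ <;>
      simp only [sub_zero]
    · exact notS (big _)
    · exact notS (big _)
    · intro heq
      have e : NN a b - NN (a-1) b = (2*a+b) - 1 := by unfold NN; ring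
      rw [heq, sub_self] at e
      omega

lemma fara (a b : ℤ) (h : 8 ≤ |a|) : GoodPair a b := by
  have ha2 : 64 ≤ a^2 := by nlinarith [sq_abs a, abs_nonneg a]
  have big : ∀ y : ℤ, 36 < NN a y := by
    intro y
    have h4 : 4 * NN a y = (2*y+a)^2 + 3*a^2 := by unfold NN; ring
    nlinarith [sq_nonneg (2*y+a)]
  by_cases hc : a + 2*b = 1
  · refine ⟨(0,0), by decide, (0,-1), by decide, ?_, ?_, ?_⟩ <;>
      simp only [sub_zero, sub_neg_eq_add]
    · exact notS (big _)
    · exact notS (big _)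
    · intro heq
      have e : NN a b - NN a (b+1) = -(a+2*b) - 1 := by unfold NN; ring
      rw [heq, sub_self] at e
      omega
  · refine ⟨(0,0), by decide, (0,1), by decide, ?_, ?_, ?_⟩ <;>
      simp only [sub_zero]
    · exact notS (big _)
    · exact notS (big _)
    · intro heq
      have e : NN a b - NN a (b-1) = (a+2*b) - 1 := by unfold NN; ring
      rw [heq, sub_self] at e
      omega

lemma key (a b : ℤ) (hout : ¬(|a| ≤ 3 ∧ |b| ≤ 3 ∧ |a+b| ≤ 3)) : GoodPair a b := by
  rcases le_or_gt (|a|) 7 with hA | hA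
  · rcases le_or_gt (|b|) 7 with hB | hB
    · exact near a b (abs_le.mp hA) (abs_le.mp hB) hout
    · exact farb a b hB
  · exact fara a b hA

/-! ### Finiteness -/

lemma hex_sub : hexR 3 ⊆ Set.Icc (-3:ℝ) 3 ×ˢ Set.Icc (-3:ℝ) 3 := by
  apply convexHull_min ?_ ((convex_Icc _ _).prod (convex_Icc _ _))
  have h2 : Real.sqrt 3 ≤ 2 := by
    nlinarith [Real.sq_sqrt (show (0:ℝ) ≤ 3 by norm_num), Real.sqrt_nonneg 3]
  have h0 : (0:ℝ) ≤ Real.sqrt 3 := Real.sqrt_nonneg 3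
  intro v hv
  simp only [Set.mem_insert_iff, Set.mem_singleton_iff] at hv
  rcases hv with rfl|rfl|rfl|rfl|rfl|rfl <;>
    refine ⟨⟨?_, ?_⟩, ⟨?_, ?_⟩⟩ <;> simp [tri] <;> nlinarith

lemma H_finite : (triLattice ∩ hexR 3).Finite := by
  apply Set.Finite.subset
    (((Set.finite_Icc (-4:ℤ) 4).prod (Set.finite_Icc (-3:ℤ) 3)).image
      (fun q : ℤ × ℤ => tri q.1 q.2))
  rintro v ⟨⟨aa, bb, rfl⟩, hhex⟩
  have hbox := hex_sub hhex
  simp only [tri, Set.mem_prod, Set.mem_Icc] at hbox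
  obtain ⟨⟨h1, h2⟩, h3, h4⟩ := hbox
  have hsq : Real.sqrt 3 ^ 2 = 3 := Real.sq_sqrt (by norm_num)
  have hb2 : (bb:ℝ)^2 ≤ 12 := by nlinarith
  have hbZ : bb^2 ≤ 12 := by exact_mod_cast hb2
  have hb : -3 ≤ bb ∧ bb ≤ 3 := by constructor <;> nlinarith
  have hbR1 : (-3:ℝ) ≤ bb := by exact_mod_cast hb.1
  have hbR2 : (bb:ℝ) ≤ 3 := by exact_mod_cast hb.2
  have haR1 : (-5:ℝ) < aa := by linarith
  have haR2 : (aa:ℝ) < 5 := by linarith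
  have ha1 : -5 < aa := by exact_mod_cast haR1
  have ha2 : aa < 5 := by exact_mod_cast haR2
  exact ⟨(aa, bb), ⟨⟨by omega, by omega⟩, hb.1, hb.2⟩, rfl⟩

lemma sqdSet_finite {X : Set (ℝ × ℝ)} (hX : X.Finite) : (sqdSet X).Finite := by
  have hsub : sqdSet X ⊆ (fun pq : (ℝ × ℝ) × (ℝ × ℝ) => sqd pq.1 pq.2) '' (X ×ˢ X) := by
    rintro d ⟨p, hp, q, hq, -, rfl⟩
    exact ⟨(p, q), ⟨hp, hq⟩, rfl⟩
  exact Set.Finite.subset ((hX.prod hX).image _) hsub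

/-! ### Realization of the 15 base distances -/

lemma realize : ∀ s ∈ Sl, ∃ q ∈ Hl, ∃ r ∈ Hl, NN (q.1 - r.1) (q.2 - r.2) = s := by decide

lemma Sl_pos : ∀ s ∈ Sl, 0 < s := by decide

/-! ### Main theorem -/

theorem hexagon_side3_adding_point_two_new_distances
    (p : ℝ × ℝ) (hp : p ∈ triLattice) (hnot : p ∉ triLattice ∩ hexR 3) :
    17 ≤ (sqdSet ((triLattice ∩ hexR 3) ∪ {p})).ncard := by
  obtain ⟨a, b, rfl⟩ := hp
  set H : Set (ℝ × ℝ) := triLattice ∩ hexR 3 with hH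
  set X : Set (ℝ × ℝ) := H ∪ {tri a b} with hX
  have hout : ¬(|a| ≤ 3 ∧ |b| ≤ 3 ∧ |a+b| ≤ 3) := by
    intro ⟨h1, h2, h3⟩
    exact hnot ⟨⟨a, b, rfl⟩, tri_mem_hexR a b h1 h2 h3⟩
  obtain ⟨q, hq, r, hr, hq1, hr1, hqr⟩ := key a b hout
  set n1 : ℤ := NN (a - q.1) (b - q.2) with hn1
  set n2 : ℤ := NN (a - r.1) (b - r.2) with hn2
  -- the 17 integer values
  set SF : Finset ℤ := Sl.toFinset with hSF
  set T : Finset ℤ := insert n1 (insert n2 SF) with hT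
  have hSFcard : SF.card = 15 := by decide
  have hn2SF : n2 ∉ SF := by rw [hSF, List.mem_toFinset]; exact hr1
  have hn1SF : n1 ∉ insert n2 SF := by
    simp only [Finset.mem_insert]
    rintro (h | h)
    · exact hqr h
    · exact hq1 (List.mem_toFinset.mp h)
  have hTcard : T.card = 17 := by
    rw [hT, Finset.card_insert_of_notMem hn1SF, Finset.card_insert_of_notMem hn2SF, hSFcard]
  -- real version
  set TR : Finset ℝ := T.image (fun n : ℤ => (n:ℝ)) with hTR
  have hTRcard : TR.card = 17 := by
    rw [hTR, Finset.card_image_of_injective _ Int.cast_injective, hTcard]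
  -- each element of TR is a realized squared distance
  have hmemH : ∀ s ∈ Hl, tri s.1 s.2 ∈ X := fun s hs => Or.inl (Hl_mem s hs)
  have hpX : tri a b ∈ X := Or.inr rfl
  have hsub : (TR : Set ℝ) ⊆ sqdSet X := by
    intro x hx
    simp only [hTR, Finset.coe_image, Set.mem_image, Finset.mem_coe, hT,
      Finset.mem_insert] at hx
    obtain ⟨n, hn, rfl⟩ := hx
    rcases hn with rfl | rfl | hn
    · -- n1 : distance from p to tri q
      refine ⟨tri a b, hpX, tri q.1 q.2, hmemH q hq, ?_, ?_⟩
      · intro heq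
        exact hnot (heq ▸ Hl_mem q hq)
      · rw [sqd_tri_s18]
    · refine ⟨tri a b, hpX, tri r.1 r.2, hmemH r hr, ?_, ?_⟩
      · intro heq
        exact hnot (heq ▸ Hl_mem r hr)
      · rw [sqd_tri_s18]
    · -- one of the 15 base values
      have hnS : n ∈ Sl := by rwa [hSF, List.mem_toFinset] at hn
      obtain ⟨u, hu, v, hv, huv⟩ := realize n hnS
      refine ⟨tri u.1 u.2, hmemH u hu, tri v.1 v.2, hmemH v hv, ?_, ?_⟩
      · intro heq
        obtain ⟨e1, e2⟩ := tri_inj heq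
        rw [e1, e2, sub_self, sub_self] at huv
        have : (0:ℤ) < n := Sl_pos n hnS
        simp [NN] at huv
        omega
      · rw [sqd_tri_s18, huv]
  -- conclude
  have hfin : (sqdSet X).Finite := by
    apply sqdSet_finite
    exact H_finite.union (Set.finite_singleton _)
  calc (17 : ℕ) = TR.card := hTRcard.symm
    _ = (TR : Set ℝ).ncard := (Set.ncard_coe_finset TR).symm
    _ ≤ (sqdSet X).ncard := Set.ncard_le_ncard hsub hfin
end
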